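/- arXiv:1209.6539 — 3 statements merged into one kernel-verified Lean document; each statement's English description precedes it below -/
import Mathlib

section
/- Let M ≥ 2 and consider the (M−1) × M matrix A over ℚ whose rows are indexed by k = 0, 1, …, M−2, where row k is the vector (2^{M−1}, 2^{σ_k(2)}, …, 2^{σ_k(M)}) with σ_k the k-fold right rotation of the sequence (M−2, M−3, …, 0) in positions 2 through M (i.e., row 0 is (2^{M−1}, 2^{M−2}, 2^{M−3}, …, 2^0), row 1 is (2^{M−1}, 2^0, 2^{M−2}, …, 2^1), row 2 is (2^{M−1}, 2^1, 2^0, 2^{M−2}, …, 2^2), etc.). Then A has rank M−1. -/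
lemma aux_mod_eq (N a : ℕ) (hN : 1 ≤ N) (ha : a < 2 * N) (h : a % N = N - 1) :
    a = N - 1 ∨ a = 2 * N - 1 := by
  rcases Nat.lt_or_ge a N with h' | h'
  · left; rw [Nat.mod_eq_of_lt h'] at h; exact h
  · right
    rw [Nat.mod_eq_sub_mod h', Nat.mod_eq_of_lt (by omega)] at h
    omega

lemma aux_indep (N : ℕ) (hN : 1 ≤ N) (x : Fin N → ℚ)
    (hF : ∀ t : ℕ, t < N → ∑ k : Fin N, x k * 2 ^ (((k : ℕ) + t) % N) = 0) :
    x = 0 := by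
  funext k₀
  have hk₀ : (k₀ : ℕ) < N := k₀.isLt
  set t := N - 1 - (k₀ : ℕ) with htdef
  have ht : t < N := by omega
  have hkt : (k₀ : ℕ) + t = N - 1 := by omega
  have ht' : (t + 1) % N < N := Nat.mod_lt _ (by omega)
  have h1 := hF t ht
  have h2 := hF ((t + 1) % N) ht'
  have hS : ∑ k : Fin N, x k * (2 * 2 ^ (((k : ℕ) + t) % N)
      - 2 ^ (((k : ℕ) + (t + 1) % N) % N)) = 0 := by
    have e : ∑ k : Fin N, x k * (2 * 2 ^ (((k : ℕ) + t) % N)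
        - 2 ^ (((k : ℕ) + (t + 1) % N) % N))
        = 2 * (∑ k : Fin N, x k * 2 ^ (((k : ℕ) + t) % N))
          - ∑ k : Fin N, x k * 2 ^ (((k : ℕ) + (t + 1) % N) % N) := by
      rw [Finset.mul_sum, ← Finset.sum_sub_distrib]
      exact Finset.sum_congr rfl fun k _ => by ring
    rw [e, h1, h2]; ring
  have hsingle : ∑ k : Fin N, x k * (2 * 2 ^ (((k : ℕ) + t) % N)
      - 2 ^ (((k : ℕ) + (t + 1) % N) % N)) = x k₀ * (2 ^ N - 1) := by
    rw [Finset.sum_eq_single k₀]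
    · have e1 : ((k₀ : ℕ) + t) % N = N - 1 := by
        rw [hkt, Nat.mod_eq_of_lt (by omega)]
      have e2 : ((k₀ : ℕ) + (t + 1) % N) % N = 0 := by
        rw [Nat.add_mod_mod, ← Nat.add_assoc, hkt]
        have : N - 1 + 1 = N := by omega
        rw [this, Nat.mod_self]
      rw [e1, e2]
      have : (2 : ℚ) * 2 ^ (N - 1) = 2 ^ N := by
        rw [← pow_succ']; congr 1; omega
      rw [this]; ring
    · intro k _ hk
      have hkk : (k : ℕ) ≠ (k₀ : ℕ) := fun h => hk (Fin.ext h)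
      have hklt : (k : ℕ) < N := k.isLt
      have e3 : ((k : ℕ) + t) % N ≠ N - 1 := by
        intro h
        rcases aux_mod_eq N ((k : ℕ) + t) hN (by omega) h with h' | h' <;> omega
      have e4 : ((k : ℕ) + (t + 1) % N) % N = ((k : ℕ) + t) % N + 1 := by
        rw [Nat.add_mod_mod, ← Nat.add_assoc]
        have hlt : ((k : ℕ) + t) % N < N := Nat.mod_lt _ (by omega)
        have : ((k : ℕ) + t + 1) % N = (((k : ℕ) + t) % N + 1) % N := by
          rw [Nat.mod_add_mod]
        rw [this, Nat.mod_eq_of_lt (by omega)]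
      rw [e4, pow_succ]
      ring
    · intro h; exact absurd (Finset.mem_univ k₀) h
  rw [hsingle] at hS
  have h2N : (2 : ℚ) ^ N - 1 ≠ 0 := by
    have : (1 : ℚ) < 2 ^ N := one_lt_pow₀ (by norm_num) (by omega)
    intro h; rw [sub_eq_zero] at h; rw [← h] at this; exact lt_irrefl _ this
  have := mul_eq_zero.mp hS
  simpa [h2N] using this

/-- The (M-1) × M group coefficient matrix of triangular network coding,
whose row `k` is `(2^(M-1), 2^((M-1-j+k) % (M-1)))_{j=1..M-1}` (0-indexed columns),
has rank `M-1`. -/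
theorem stmt0 (M : ℕ) (hM : 2 ≤ M) (A : Matrix (Fin (M - 1)) (Fin M) ℚ)
    (hA : ∀ (k : Fin (M - 1)) (j : Fin M),
      A k j = if (j : ℕ) = 0 then 2 ^ (M - 1)
        else (2 : ℚ) ^ ((M - 1 - (j : ℕ) + (k : ℕ)) % (M - 1))) :
    A.rank = M - 1 := by
  have hN1 : 1 ≤ M - 1 := by omega
  have hinj : Function.Injective A.transpose.mulVecLin := by
    rw [← LinearMap.ker_eq_bot, LinearMap.ker_eq_bot']
    intro x hx
    apply aux_indep (M - 1) hN1 x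
    intro t ht
    have hjM : M - 1 - t < M := by omega
    have h0 := congrFun hx ⟨M - 1 - t, hjM⟩
    simp only [Matrix.mulVecLin_apply, Matrix.mulVec, dotProduct,
      Matrix.transpose_apply, Pi.zero_apply] at h0
    rw [← h0]
    apply Finset.sum_congr rfl
    intro k _
    rw [hA k ⟨M - 1 - t, hjM⟩]
    have hne : ¬ ((⟨M - 1 - t, hjM⟩ : Fin M) : ℕ) = 0 := by simp; omega
    rw [if_neg hne]
    have he : (M - 1 - ((⟨M - 1 - t, hjM⟩ : Fin M) : ℕ) + (k : ℕ)) = (k : ℕ) + t := by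
      simp; omega
    rw [he, mul_comm]
  rw [← Matrix.rank_transpose, Matrix.rank, LinearMap.finrank_range_of_inj hinj]
  simp
end

section
/- Let M ≥ 2 and let λ : Fin M → ℚ be any vector. Consider the M × M matrix D over ℚ whose first M−1 rows are: row i (for i = 1,…,M−1) has 2^{M−1} in column 1, the value 2^{M−1} − 1 in column M+1−i, and 0 elsewhere; and whose last row is (λ_1, λ_2, …, λ_M). Then det D ≠ 0 if and only if 2^{M−1} · (λ_2 + λ_3 + ⋯ + λ_M) ≠ (2^{M−1} − 1) · λ_1. -/
/-- The M × M matrix whose first M-1 rows are the simplified group vectors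
(`2^(M-1)` in column 0 and `2^(M-1)-1` in column `M-1-i`, 0-indexed) and whose
last row is `λ` has nonzero determinant iff
`2^(M-1) (λ_2 + ⋯ + λ_M) ≠ (2^(M-1) - 1) λ_1`. -/
theorem stmt2 (M : ℕ) (hM : 2 ≤ M) (lam : Fin M → ℚ) (D : Matrix (Fin M) (Fin M) ℚ)
    (hD : ∀ i j : Fin M,
      D i j = if (i : ℕ) = M - 1 then lam j
        else if (j : ℕ) = 0 then 2 ^ (M - 1)
        else if (j : ℕ) = M - 1 - (i : ℕ) then 2 ^ (M - 1) - 1 else 0) :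
    D.det ≠ 0 ↔
      2 ^ (M - 1) * (∑ j ∈ Finset.univ.filter (fun j : Fin M => (j : ℕ) ≠ 0), lam j) ≠
        (2 ^ (M - 1) - 1) * lam ⟨0, by omega⟩ := by
  set a : ℚ := 2 ^ (M - 1) with ha
  set b : ℚ := 2 ^ (M - 1) - 1 with hb
  have hb0 : b ≠ 0 := by
    have h2 : (2:ℚ)^1 ≤ 2^(M-1) := pow_le_pow_right₀ (by norm_num) (by omega)
    rw [hb]; nlinarith [h2]
  set z0 : Fin M := ⟨0, by omega⟩ with hz0
  set S : ℚ := ∑ j ∈ Finset.univ.filter (fun j : Fin M => (j : ℕ) ≠ 0), lam j with hS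
  have hfilter : (Finset.univ.filter (fun j : Fin M => (j : ℕ) = 0)) = {z0} := by
    ext j; simp [Fin.ext_iff, hz0]
  -- key row-sum computation for the first M-1 rows
  have key : ∀ i : Fin M, (i : ℕ) ≠ M - 1 → ∀ v : Fin M → ℚ,
      D.mulVec v i = a * v z0 + b * v ⟨M - 1 - (i : ℕ), by omega⟩ := by
    intro i hi v
    set j1 : Fin M := ⟨M - 1 - (i : ℕ), by omega⟩ with hj1
    have hj1v : (j1 : ℕ) = M - 1 - (i : ℕ) := rfl
    have hz0v : (z0 : ℕ) = 0 := rfl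
    have hij : (i : ℕ) < M - 1 := by omega
    have hj10 : j1 ≠ z0 := by
      intro h
      have := congrArg Fin.val h
      rw [hj1v, hz0v] at this
      omega
    have hterm : ∀ j : Fin M, D i j * v j =
        (if j = z0 then a * v z0 else 0) + (if j = j1 then b * v j1 else 0) := by
      intro j
      rw [hD, if_neg hi]
      by_cases h0 : j = z0
      · subst h0
        rw [if_pos hz0v, if_pos rfl, if_neg (Ne.symm hj10)]
        ring
      · by_cases h1 : j = j1
        · subst h1
          have hne : (j1 : ℕ) ≠ 0 := by omega
          rw [if_neg hne, if_pos hj1v, if_neg hj10, if_pos rfl]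
          ring
        · have hj0 : (j : ℕ) ≠ 0 := fun h => h0 (Fin.ext h)
          have hj1' : (j : ℕ) ≠ M - 1 - (i : ℕ) := fun h => h1 (Fin.ext h)
          rw [if_neg hj0, if_neg hj1', if_neg h0, if_neg h1]
          ring
    show ∑ j, D i j * v j = a * v z0 + b * v j1
    rw [Finset.sum_congr rfl fun j _ => hterm j, Finset.sum_add_distrib,
      Finset.sum_ite_eq' Finset.univ, Finset.sum_ite_eq' Finset.univ]
    simp
  -- last row
  have lastrow : ∀ v : Fin M → ℚ, D.mulVec v ⟨M - 1, by omega⟩ = ∑ j, lam j * v j := by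
    intro v
    show ∑ j, D ⟨M - 1, by omega⟩ j * v j = ∑ j, lam j * v j
    refine Finset.sum_congr rfl fun j _ => ?_
    rw [hD]
    simp
  rw [ne_eq, ← Matrix.exists_mulVec_eq_zero_iff, ← not_iff_not, not_not, not_not]
  constructor
  · rintro ⟨v, hv, hv0⟩
    have hrow : ∀ j : Fin M, (j : ℕ) ≠ 0 → b * v j = -(a * v z0) := by
      intro j hj
      have hjlt : (j : ℕ) ≤ M - 1 := by omega
      set i : Fin M := ⟨M - 1 - (j : ℕ), by omega⟩ with hi
      have hiM : (i : ℕ) ≠ M - 1 := by simp [hi]; omega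
      have := key i hiM v
      have hji : (⟨M - 1 - (i : ℕ), by omega⟩ : Fin M) = j := by
        simp [hi, Fin.ext_iff]; omega
      rw [hji] at this
      have h0 : D.mulVec v i = 0 := congrFun hv0 i
      rw [h0] at this
      linarith [this]
    have hvz0 : v z0 ≠ 0 := by
      intro h
      apply hv
      funext j
      by_cases hj : (j : ℕ) = 0
      · rw [show j = z0 from Fin.ext hj, h]; rfl
      · have := hrow j hj
        rw [h] at this
        simp at this
        rcases this with h' | h'
        · exact absurd h' hb0
        · exact h'
    have hlast : ∑ j, lam j * v j = 0 := by
      rw [← lastrow v, congrFun hv0 _]; rfl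
    have hsplit : ∑ j, lam j * (b * v j) = b * (lam z0 * v z0) + ∑ j ∈ Finset.univ.filter (fun j : Fin M => (j : ℕ) ≠ 0), lam j * (-(a * v z0)) := by
      rw [← Finset.sum_filter_add_sum_filter_not Finset.univ (fun j : Fin M => (j : ℕ) = 0)]
      congr 1
      · rw [hfilter, Finset.sum_singleton]; ring
      · refine Finset.sum_congr (by simp) fun j hj => ?_
        simp only [Finset.mem_filter] at hj
        rw [hrow j hj.2]
    have : b * ∑ j, lam j * v j = ∑ j, lam j * (b * v j) := by
      rw [Finset.mul_sum]; exact Finset.sum_congr rfl fun j _ => by ring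
    rw [hlast, mul_zero] at this
    rw [hsplit, ← Finset.sum_mul, ← hS] at this
    have : (b * lam z0 - a * S) * v z0 = 0 := by linarith [this]
    rcases mul_eq_zero.1 this with h | h
    · linarith [h]
    · exact absurd h hvz0
  · intro heq
    refine ⟨fun j => if (j : ℕ) = 0 then b else -a, ?_, ?_⟩
    · intro h
      have := congrFun h z0
      simp [hz0] at this
      exact hb0 this
    · funext i
      by_cases hi : (i : ℕ) = M - 1
      · have hiz : i = ⟨M - 1, by omega⟩ := Fin.ext hi
        rw [hiz, lastrow]
        have : ∑ j, lam j * (if (j : ℕ) = 0 then b else -a) =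
            b * lam z0 + ∑ j ∈ Finset.univ.filter (fun j : Fin M => (j : ℕ) ≠ 0), lam j * (-a) := by
          rw [← Finset.sum_filter_add_sum_filter_not Finset.univ (fun j : Fin M => (j : ℕ) = 0)]
          congr 1
          · rw [hfilter, Finset.sum_singleton]; simp [hz0]; ring
          · refine Finset.sum_congr (by simp) fun j hj => ?_
            simp only [Finset.mem_filter] at hj
            rw [if_neg hj.2]
        rw [this, ← Finset.sum_mul, ← hS]
        simp only [Pi.zero_apply]
        linarith [heq]
      · rw [key i hi]
        have h1 : ((⟨M - 1 - (i : ℕ), by omega⟩ : Fin M) : ℕ) ≠ 0 := by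
          simp; omega
        simp only [hz0, if_pos rfl, if_neg h1]
        simp; ring
end

section
/- Fix M ≥ 2 and α ≥ 1. For any two distinct encoded packets within the same group of round α (ids α·ρ_k and α·ρ_l with k ≠ l, where ρ_k are the rotations of (0,1,…,M−1) anchored at a common position), the corresponding coefficient vectors (2^{α(M−1)−α·ρ_k(m)})_m and (2^{α(M−1)−α·ρ_l(m)})_m over ℚ are linearly independent. -/
/-- The triangular network coding id for anchor position `a`, rotation index `k`:
position `a` gets value `0`, and the remaining positions, taken in increasing order,
get the `k`-fold right rotation of the values `1, 2, …, M-1`. -/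
def tid (M : ℕ) (a : Fin M) (k : Fin (M - 1)) (m : Fin M) : ℕ :=
  if m = a then 0
  else M - 1 - ((M - 2 - (if (m : ℕ) < (a : ℕ) then (m : ℕ) else (m : ℕ) - 1)
    + (k : ℕ)) % (M - 1))

/-- A witness coordinate: the position whose index among the non-anchor
positions is `M - 2`. -/
def wit (M : ℕ) (a : Fin M) (hM : 2 ≤ M) : Fin M :=
  if (a : ℕ) = M - 1 then ⟨M - 2, by omega⟩ else ⟨M - 1, by omega⟩

lemma wit_ne (M : ℕ) (a : Fin M) (hM : 2 ≤ M) : wit M a hM ≠ a := by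
  unfold wit
  split <;> (intro h; apply_fun Fin.val at h; simp at h; omega)

lemma tid_wit (M : ℕ) (a : Fin M) (hM : 2 ≤ M) (k : Fin (M - 1)) :
    tid M a k (wit M a hM) = M - 1 - (k : ℕ) := by
  have hk := k.isLt
  unfold tid
  rw [if_neg (wit_ne M a hM)]
  unfold wit
  have ha := a.isLt
  split
  · next h =>
    have : ((⟨M - 2, by omega⟩ : Fin M) : ℕ) < (a : ℕ) := by simp; omega
    rw [if_pos this]
    simp only []
    have : M - 2 - (M - 2) + (k : ℕ) = (k : ℕ) := by omega
    rw [this, Nat.mod_eq_of_lt hk]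
  · next h =>
    have : ¬ ((⟨M - 1, by omega⟩ : Fin M) : ℕ) < (a : ℕ) := by simp; omega
    rw [if_neg this]
    simp only []
    have : M - 2 - (M - 1 - 1) + (k : ℕ) = (k : ℕ) := by omega
    rw [this, Nat.mod_eq_of_lt hk]

/-- Within one group of round `α` (ids `α·ρ_k` for rotations `ρ_k` anchored at a
common position `a`), the coefficient vectors `(2^(α(M-1) - α·ρ_k(m)))_m` and
`(2^(α(M-1) - α·ρ_l(m)))_m` of two distinct encoded packets are linearly
independent over ℚ. -/
theorem stmt13 (M α : ℕ) (hM : 2 ≤ M) (hα : 1 ≤ α) (a : Fin M)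
    (k l : Fin (M - 1)) (hkl : k ≠ l) :
    LinearIndependent ℚ
      ![(fun m : Fin M => (2 : ℚ) ^ (α * (M - 1) - α * tid M a k m)),
        (fun m : Fin M => (2 : ℚ) ^ (α * (M - 1) - α * tid M a l m))] := by
  rw [LinearIndependent.pair_iff]
  intro s t h
  have ha := congrFun h a
  have hm := congrFun h (wit M a hM)
  simp only [Pi.add_apply, Pi.smul_apply, smul_eq_mul, Pi.zero_apply] at ha hm
  have hta : tid M a k a = 0 := by simp [tid]
  have htla : tid M a l a = 0 := by simp [tid]
  rw [hta, htla] at ha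
  rw [tid_wit M a hM k, tid_wit M a hM l] at hm
  have hk := k.isLt
  have hl := l.isLt
  have hek : α * (M - 1) - α * (M - 1 - (k : ℕ)) = α * (k : ℕ) := by
    rw [← Nat.mul_sub]
    congr 1
    omega
  have hel : α * (M - 1) - α * (M - 1 - (l : ℕ)) = α * (l : ℕ) := by
    rw [← Nat.mul_sub]
    congr 1
    omega
  rw [hek, hel] at hm
  simp only [Nat.mul_zero, Nat.sub_zero] at ha
  -- from ha : s * 2^e + t * 2^e = 0
  have hpow : (2 : ℚ) ^ (α * (M - 1)) ≠ 0 := by positivity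
  have hst : s = -t := by
    have : (s + t) * (2 : ℚ) ^ (α * (M - 1)) = 0 := by ring_nf; ring_nf at ha; linarith
    rcases mul_eq_zero.mp this with h' | h'
    · linarith
    · exact absurd h' hpow
  have hkl' : α * (k : ℕ) ≠ α * (l : ℕ) := by
    intro h'
    exact hkl (Fin.ext (Nat.eq_of_mul_eq_mul_left (by omega) h'))
  have hne : (2 : ℚ) ^ (α * (k : ℕ)) ≠ (2 : ℚ) ^ (α * (l : ℕ)) := by
    intro h'
    exact hkl' (pow_right_injective₀ (by norm_num) (by norm_num) h')
  subst hst
  have : t * ((2 : ℚ) ^ (α * (l : ℕ)) - (2 : ℚ) ^ (α * (k : ℕ))) = 0 := by linarith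
  rcases mul_eq_zero.mp this with h' | h'
  · constructor <;> simp [h']
  · exact absurd (by linarith : (2:ℚ) ^ (α * (k : ℕ)) = (2:ℚ) ^ (α * (l : ℕ))) hne
end
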